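/- arXiv:math/0611849 — 2 statements merged into one kernel-verified Lean document; each statement's English description precedes it below -/
import Mathlib

section
/- Let s₁, s₂ be complex numbers with Re(s₁) > 1 and Re(s₂) > 1. Then ∫∫_{{(x,y) : x and y integral, |x|_f > |y|_f}} |x|_f^{s₁} |y|_f^{s₂} dμ(x) dμ(y) = ζ(s₁,s₂), where ζ(s₁,s₂) = ∑_{0 < n₁ < n₂} n₁^{-s₁} n₂^{-s₂} is the double zeta function. -/
open MeasureTheory

noncomputable section

instance (p : Nat.Primes) : Fact (p : ℕ).Prime := ⟨p.2⟩

/-- The group in which finite ideles live: tuples of nonzero `p`-adic numbers. -/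
abbrev IdeleComponents : Type := ∀ p : Nat.Primes, ℚ_[(p : ℕ)]ˣ

/-- The group of finite ideles of `ℚ`: tuples of nonzero `p`-adic numbers which are
`p`-adic units for all but finitely many `p` (the unit group of the restricted
product of the `ℚ_p` with respect to the `ℤ_p`). -/
def FiniteIdeles : Subgroup IdeleComponents where
  carrier := {x | {p : Nat.Primes | ‖((x p : ℚ_[(p : ℕ)]))‖ ≠ 1}.Finite}
  one_mem' := by
    simp
  mul_mem' := by
    intro x y hx hy
    refine (hx.union hy).subset ?_
    intro p hp
    by_contra h
    simp only [Set.mem_union, Set.mem_setOf_eq, not_or, not_not] at h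
    apply hp
    simp [Pi.mul_apply, Units.val_mul, norm_mul, h.1, h.2]
  inv_mem' := by
    intro x hx
    refine hx.subset ?_
    intro p hp
    simp only [Set.mem_setOf_eq, Pi.inv_apply] at hp ⊢
    rw [Units.val_inv_eq_inv_val, norm_inv] at hp
    intro h
    rw [h] at hp
    simp at hp

/-- The idele norm of a finite idele: the product `∏_p |x_p|_p` over all primes
(all but finitely many factors equal `1`). -/
def fnorm (x : FiniteIdeles) : ℝ :=
  ∏ᶠ p : Nat.Primes, ‖((x : IdeleComponents) p : ℚ_[(p : ℕ)])‖

/-- A finite idele is integral if all of its components are `p`-adic integers. -/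
def IsIntegralIdele (x : FiniteIdeles) : Prop :=
  ∀ p : Nat.Primes, ‖((x : IdeleComponents) p : ℚ_[(p : ℕ)])‖ ≤ 1

/-- The subset `Ẑ^×` of the finite ideles: all components are `p`-adic units. -/
def zHatUnits : Set FiniteIdeles :=
  {x | ∀ p : Nat.Primes, ‖((x : IdeleComponents) p : ℚ_[(p : ℕ)])‖ = 1}

/-!
An integral idele `x` with `|x|_f = 1/n` has `|x_p|_p = |n|_p` for every `p`, so it lies in the
coset `n·Ẑ^×`, which has measure `μ(Ẑ^×) = 1` by translation invariance. The domain of integration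
is therefore the disjoint union of the boxes `n₁Ẑ^× × n₂Ẑ^×` with `0 < n₁ < n₂`, on each of which
the integrand is the constant `n₁^{-s₁} n₂^{-s₂}`; for `Re sᵢ > 1` this family is absolutely
summable, which gives integrability and lets the integral be computed box by box.
-/

namespace Padic

variable {p : ℕ} [Fact p.Prime]

theorem norm_natCast_prime {q : ℕ} (hq : q.Prime) :
    ‖(q : ℚ_[p])‖ = if q = p then (p : ℝ)⁻¹ else 1 := by
  split_ifs with h
  · subst h
    exact norm_p
  · exact norm_natCast_eq_one_iff.mpr <| (Nat.coprime_primes Fact.out hq).mpr (Ne.symm h)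

theorem norm_eq_inv_pow_valuation_toNat {x : ℚ_[p]} (hx0 : x ≠ 0) (hx : ‖x‖ ≤ 1) :
    ‖x‖ = (p : ℝ)⁻¹ ^ x.valuation.toNat := by
  rw [norm_eq_zpow_neg_valuation hx0, ← Int.toNat_of_nonneg ((norm_le_one_iff_val_nonneg x).mp hx),
    zpow_neg, zpow_natCast, inv_pow, Int.toNat_natCast]

end Padic

theorem integral_iUnion_eq_tsum_of_eqOn_const {ι X E : Type*} [Countable ι] [MeasurableSpace X]
    [NormedAddCommGroup E] [NormedSpace ℝ E] [CompleteSpace E] {μ : Measure X}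
    {s : ι → Set X} {f : X → E} {c : ι → E} (hs : ∀ i, MeasurableSet (s i))
    (hd : Pairwise (Function.onFun Disjoint s)) (hμ : ∀ i, μ (s i) ≠ ⊤)
    (hf : ∀ i, Set.EqOn f (fun _ => c i) (s i)) (hc : Summable fun i => μ.real (s i) * ‖c i‖) :
    ∫ x in ⋃ i, s i, f x ∂μ = ∑' i, μ.real (s i) • c i := by
  have hint (i : ι) : ∫ x in s i, f x ∂μ = μ.real (s i) • c i := by
    rw [setIntegral_congr_fun (hs i) (hf i), setIntegral_const]
  have hint_norm (i : ι) : ∫ x in s i, ‖f x‖ ∂μ = μ.real (s i) * ‖c i‖ := by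
    rw [setIntegral_congr_fun (hs i) fun x hx => congrArg norm (hf i hx), setIntegral_const,
      smul_eq_mul]
  have hon (i : ι) : IntegrableOn f (s i) μ :=
    (integrableOn_const (hμ i)).congr_fun (fun x hx => (hf i hx).symm) (hs i)
  rw [integral_iUnion hs hd
    (integrableOn_iUnion_of_summable_integral_norm hon (by simpa only [hint_norm] using hc))]
  exact tsum_congr hint

theorem Complex.ofReal_inv_natCast_cpow (n : ℕ) (s : ℂ) :
    (((n : ℝ)⁻¹ : ℝ) : ℂ) ^ s = (n : ℂ) ^ (-s) := by
  rw [ofReal_inv, ofReal_natCast, inv_cpow _ _ (by rw [natCast_arg]; exact Real.pi_ne_zero.symm),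
    cpow_neg]

theorem summable_norm_natCast_cpow_neg_mul {s₁ s₂ : ℂ} (h₁ : 1 < s₁.re) (h₂ : 1 < s₂.re) :
    Summable fun m : ℕ × ℕ => ‖(m.1 : ℂ) ^ (-s₁) * (m.2 : ℂ) ^ (-s₂)‖ := by
  have h {s : ℂ} (hs : 1 < s.re) : Summable fun n : ℕ => ‖(n : ℂ) ^ (-s)‖ := by
    have hre : (-s).re = -s.re := Complex.neg_re s
    simp_rw [Complex.norm_natCast_cpow_of_re_ne_zero _ (hre ▸ neg_ne_zero.mpr (by linarith)), hre]
    exact Real.summable_nat_rpow.mpr (by linarith)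
  exact Summable.mul_norm (f := fun n : ℕ => (n : ℂ) ^ (-s₁)) (g := fun n : ℕ => (n : ℂ) ^ (-s₂))
    (h h₁) (h h₂)

namespace FiniteIdeles

def localNorm (x : FiniteIdeles) (p : Nat.Primes) : ℝ :=
  ‖((x : IdeleComponents) p : ℚ_[(p : ℕ)])‖

theorem finite_mulSupport_localNorm (x : FiniteIdeles) :
    (Function.mulSupport (localNorm x)).Finite :=
  x.2

theorem localNorm_mul (x y : FiniteIdeles) (p : Nat.Primes) :
    localNorm (x * y) p = localNorm x p * localNorm y p :=
  norm_mul _ _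

theorem localNorm_inv (x : FiniteIdeles) (p : Nat.Primes) :
    localNorm x⁻¹ p = (localNorm x p)⁻¹ := by
  rw [localNorm, localNorm, ← norm_inv, ← Units.val_inv_eq_inv_val]
  rfl

theorem localNorm_ne_zero (x : FiniteIdeles) (p : Nat.Primes) : localNorm x p ≠ 0 :=
  norm_ne_zero_iff.mpr (Units.ne_zero _)

theorem fnorm_eq_finprod (x : FiniteIdeles) : fnorm x = ∏ᶠ p, localNorm x p := rfl

theorem fnorm_congr {x y : FiniteIdeles} (h : ∀ p, localNorm x p = localNorm y p) :
    fnorm x = fnorm y :=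
  finprod_congr h

theorem fnorm_mul (x y : FiniteIdeles) : fnorm (x * y) = fnorm x * fnorm y := by
  simp only [fnorm_eq_finprod, localNorm_mul]
  exact finprod_mul_distrib (finite_mulSupport_localNorm x) (finite_mulSupport_localNorm y)

def natIdele (n : ℕ) (hn : n ≠ 0) : FiniteIdeles :=
  ⟨fun p => Units.mk0 (n : ℚ_[(p : ℕ)]) (Nat.cast_ne_zero.mpr hn), by
    refine ((n.primeFactors.finite_toSet).preimage Subtype.val_injective.injOn).subset ?_
    intro (p : Nat.Primes) hp
    have hcop : ¬ (p : ℕ).Coprime n := fun h =>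
      hp ((Padic.norm_natCast_eq_one_iff (p := p)).mpr h)
    exact Nat.mem_primeFactors.mpr
      ⟨p.2, (Nat.Prime.dvd_iff_not_coprime p.2).mpr hcop, hn⟩⟩

theorem localNorm_natIdele (n : ℕ) (hn : n ≠ 0) (p : Nat.Primes) :
    localNorm (natIdele n hn) p = ‖(n : ℚ_[(p : ℕ)])‖ :=
  rfl

theorem natIdele_mul {m n : ℕ} (hm : m ≠ 0) (hn : n ≠ 0) :
    natIdele (m * n) (mul_ne_zero hm hn) = natIdele m hm * natIdele n hn :=
  Subtype.ext <| funext fun _ => Units.ext (Nat.cast_mul m n)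

theorem fnorm_natIdele_prime (p : Nat.Primes) :
    fnorm (natIdele p p.2.ne_zero) = ((p : ℕ) : ℝ)⁻¹ := by
  rw [fnorm_eq_finprod, finprod_eq_single _ p]
  · rw [localNorm_natIdele, Padic.norm_natCast_prime p.2, if_pos rfl]
  · intro q hq
    rw [localNorm_natIdele, Padic.norm_natCast_prime p.2,
      if_neg fun h => hq (Subtype.ext h.symm)]

theorem fnorm_natIdele (n : ℕ) (hn : n ≠ 0) : fnorm (natIdele n hn) = (n : ℝ)⁻¹ := by
  induction n using Nat.recOnMul with
  | zero => exact absurd rfl hn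
  | one => simp [fnorm_eq_finprod, localNorm_natIdele]
  | prime p hp => exact fnorm_natIdele_prime ⟨p, hp⟩
  | mul a b iha ihb =>
    obtain ⟨ha, hb⟩ := mul_ne_zero_iff.mp hn
    rw [natIdele_mul ha hb, fnorm_mul, iha ha, ihb hb, Nat.cast_mul, mul_inv]

theorem exists_localNorm_eq_natCast {x : FiniteIdeles} (hx : IsIntegralIdele x) :
    ∃ n ≠ 0, ∀ p, localNorm x p = ‖(n : ℚ_[(p : ℕ)])‖ := by
  classical
  set T := (finite_mulSupport_localNorm x).toFinset
  set a : Nat.Primes → ℕ := fun p => ((x : IdeleComponents) p : ℚ_[(p : ℕ)]).valuation.toNat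
  refine ⟨∏ p ∈ T, (p : ℕ) ^ a p,
    Finset.prod_ne_zero_iff.mpr fun p _ => pow_ne_zero _ p.2.ne_zero, fun q => ?_⟩
  have hprime (p : Nat.Primes) :
      ‖((p : ℕ) : ℚ_[(q : ℕ)])‖ = if p = q then ((q : ℕ) : ℝ)⁻¹ else 1 := by
    simp only [Padic.norm_natCast_prime p.2, Nat.Primes.coe_nat_inj]
  simp only [Nat.cast_prod, Nat.cast_pow, norm_prod, norm_pow, hprime, ite_pow, one_pow]
  rw [Finset.prod_ite_eq' T q]
  split_ifs with hq
  · exact Padic.norm_eq_inv_pow_valuation_toNat (Units.ne_zero _) (hx q)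
  · simpa [T] using hq

theorem inv_natIdele_mul_mem_zHatUnits_iff {n : ℕ} (hn : n ≠ 0) {x : FiniteIdeles} :
    (natIdele n hn)⁻¹ * x ∈ zHatUnits ↔ ∀ p, localNorm x p = ‖(n : ℚ_[(p : ℕ)])‖ := by
  refine forall_congr' fun p => ?_
  change localNorm _ p = 1 ↔ _
  rw [localNorm_mul, localNorm_inv, inv_mul_eq_one₀ (localNorm_ne_zero _ p), eq_comm,
    localNorm_natIdele]

/-- The coset `n·Ẑ^×`. -/
def natCoset (n : ℕ) : Set FiniteIdeles :=
  {x | IsIntegralIdele x ∧ fnorm x = (n : ℝ)⁻¹}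

theorem mem_natCoset_iff {n : ℕ} (hn : n ≠ 0) {x : FiniteIdeles} :
    x ∈ natCoset n ↔ ∀ p, localNorm x p = ‖(n : ℚ_[(p : ℕ)])‖ := by
  constructor
  · rintro ⟨hx, hxn⟩
    obtain ⟨m, hm, hxm⟩ := exists_localNorm_eq_natCast hx
    rw [fnorm_congr (y := natIdele m hm) hxm, fnorm_natIdele] at hxn
    obtain rfl : m = n := by exact_mod_cast inv_injective hxn
    exact hxm
  · intro h
    exact ⟨fun p => (h p).trans_le (IsUltrametricDist.norm_natCast_le_one _ n),
      (fnorm_congr (y := natIdele n hn) h).trans (fnorm_natIdele n hn)⟩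

theorem natCoset_eq_preimage {n : ℕ} (hn : n ≠ 0) :
    natCoset n = (fun x => (natIdele n hn)⁻¹ * x) ⁻¹' zHatUnits := by
  ext x
  exact (mem_natCoset_iff hn).trans (inv_natIdele_mul_mem_zHatUnits_iff hn).symm

theorem exists_mem_natCoset {x : FiniteIdeles} (hx : IsIntegralIdele x) :
    ∃ n ≠ 0, x ∈ natCoset n := by
  obtain ⟨n, hn, h⟩ := exists_localNorm_eq_natCast hx
  exact ⟨n, hn, (mem_natCoset_iff hn).mpr h⟩

theorem disjoint_natCoset {m n : ℕ} (h : m ≠ n) : Disjoint (natCoset m) (natCoset n) :=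
  Set.disjoint_left.mpr fun _ hm hn => h <| by exact_mod_cast inv_injective (hm.2.symm.trans hn.2)

theorem setOf_isIntegralIdele_fnorm_lt_eq_iUnion :
    {q : FiniteIdeles × FiniteIdeles |
        IsIntegralIdele q.1 ∧ IsIntegralIdele q.2 ∧ fnorm q.2 < fnorm q.1}
      = ⋃ m : {m : ℕ × ℕ // 0 < m.1 ∧ m.1 < m.2}, natCoset m.1.1 ×ˢ natCoset m.1.2 := by
  ext ⟨x, y⟩
  simp only [Set.mem_setOf_eq, Set.mem_iUnion, Set.mem_prod]
  constructor
  · rintro ⟨hx, hy, hlt⟩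
    obtain ⟨m, hm, hxm⟩ := exists_mem_natCoset hx
    obtain ⟨n, hn, hyn⟩ := exists_mem_natCoset hy
    rw [hxm.2, hyn.2, inv_lt_inv₀ (by positivity) (by positivity)] at hlt
    exact ⟨⟨(m, n), Nat.pos_of_ne_zero hm, by exact_mod_cast hlt⟩, hxm, hyn⟩
  · rintro ⟨⟨⟨m, n⟩, hm, hmn⟩, hxm, hyn⟩
    refine ⟨hxm.1, hyn.1, ?_⟩
    rw [hxm.2, hyn.2]
    gcongr

theorem pairwise_disjoint_natCoset_prod :
    Pairwise (Function.onFun Disjoint fun m : {m : ℕ × ℕ // 0 < m.1 ∧ m.1 < m.2} =>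
      natCoset m.1.1 ×ˢ natCoset m.1.2) := by
  intro i j hij
  refine Set.disjoint_prod.mpr ?_
  by_cases h₁ : i.1.1 = j.1.1
  · exact Or.inr (disjoint_natCoset fun h₂ => hij (Subtype.ext (Prod.ext h₁ h₂)))
  · exact Or.inl (disjoint_natCoset h₁)

end FiniteIdeles

open FiniteIdeles

theorem adelic_double_zeta_general [MeasurableSpace FiniteIdeles]
    (μ : Measure FiniteIdeles) [SFinite μ]
    (hinv : ∀ a : FiniteIdeles, MeasurePreserving (fun x => a * x) μ μ)
    (hZmeas : MeasurableSet zHatUnits)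
    (hZ : μ zHatUnits = 1)
    (s₁ s₂ : ℂ) (h₁ : 1 < s₁.re) (h₂ : 1 < s₂.re) :
    ∫ z in {q : FiniteIdeles × FiniteIdeles |
        IsIntegralIdele q.1 ∧ IsIntegralIdele q.2 ∧ fnorm q.2 < fnorm q.1},
      (fnorm z.1 : ℂ) ^ s₁ * (fnorm z.2 : ℂ) ^ s₂ ∂(μ.prod μ)
      = ∑' n : {m : ℕ × ℕ // 0 < m.1 ∧ m.1 < m.2},
          ((n : ℕ × ℕ).1 : ℂ) ^ (-s₁) * ((n : ℕ × ℕ).2 : ℂ) ^ (-s₂) := by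
  have hcoset {n : ℕ} (hn : n ≠ 0) : MeasurableSet (natCoset n) ∧ μ (natCoset n) = 1 := by
    rw [natCoset_eq_preimage hn]
    exact ⟨(hinv _).measurable hZmeas,
      ((hinv _).measure_preimage hZmeas.nullMeasurableSet).trans hZ⟩
  have hbox (m : {m : ℕ × ℕ // 0 < m.1 ∧ m.1 < m.2}) :
      MeasurableSet (natCoset m.1.1 ×ˢ natCoset m.1.2) ∧
        μ.prod μ (natCoset m.1.1 ×ˢ natCoset m.1.2) = 1 := by
    obtain ⟨hm₁, hμ₁⟩ := hcoset m.2.1.ne'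
    obtain ⟨hm₂, hμ₂⟩ := hcoset (m.2.1.trans m.2.2).ne'
    exact ⟨hm₁.prod hm₂, by rw [Measure.prod_prod, hμ₁, hμ₂, one_mul]⟩
  rw [setOf_isIntegralIdele_fnorm_lt_eq_iUnion,
    integral_iUnion_eq_tsum_of_eqOn_const (c := fun m => (m.1.1 : ℂ) ^ (-s₁) * (m.1.2 : ℂ) ^ (-s₂))
      (fun m => (hbox m).1) pairwise_disjoint_natCoset_prod
      (fun m => (hbox m).2 ▸ ENNReal.one_ne_top) ?_ ?_]
  · simp [measureReal_def, (hbox _).2]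
  · rintro m ⟨x, y⟩ ⟨hx, hy⟩
    simp only [hx.2, hy.2, Complex.ofReal_inv_natCast_cpow]
  · simp only [measureReal_def, (hbox _).2, ENNReal.toReal_one, one_mul]
    exact (summable_norm_natCast_cpow_neg_mul h₁ h₂).subtype _

/-- Let `μ` be a translation-invariant measure on the finite ideles
`𝔸_f^×` of `ℚ` with `μ(Ẑ^×) = 1` (for which `Ẑ^×` is measurable and the idele norm
`|·|_f` is measurable, as holds for any Borel measure on the idele topology).  For
complex `s₁, s₂` with real parts `> 1`, the iterated adelic integral over pairs of
integral ideles with `|x|_f > |y|_f` of `|x|_f^{s₁} |y|_f^{s₂}` equals the double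
zeta function `ζ(s₁,s₂) = ∑_{0 < n₁ < n₂} n₁^{-s₁} n₂^{-s₂}`. -/
theorem adelic_double_zeta [MeasurableSpace FiniteIdeles]
    (μ : Measure FiniteIdeles) [SFinite μ]
    (hinv : ∀ a : FiniteIdeles, MeasurePreserving (fun x => a * x) μ μ)
    (hnorm : Measurable fnorm) (hZmeas : MeasurableSet zHatUnits)
    (hZ : μ zHatUnits = 1)
    (s₁ s₂ : ℂ) (h₁ : 1 < s₁.re) (h₂ : 1 < s₂.re) :
    ∫ z in {q : FiniteIdeles × FiniteIdeles |
        IsIntegralIdele q.1 ∧ IsIntegralIdele q.2 ∧ fnorm q.2 < fnorm q.1},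
      (fnorm z.1 : ℂ) ^ s₁ * (fnorm z.2 : ℂ) ^ s₂ ∂(μ.prod μ)
      = ∑' n : {m : ℕ × ℕ // 0 < m.1 ∧ m.1 < m.2},
          ((n : ℕ × ℕ).1 : ℂ) ^ (-s₁) * ((n : ℕ × ℕ).2 : ℂ) ^ (-s₂) :=
  adelic_double_zeta_general μ hinv hZmeas hZ s₁ s₂ h₁ h₂

end
end

section
/- Let k₁, …, k_d be positive integers with k_d > 1, and set n = k₁ + ⋯ + k_d. Then ζ(k₁,…,k_d) = ∫⋯∫_{{0 < x₁ < x₂ < ⋯ < x_n < 1}} ∏_{i=1}^n ω_i(x_i) dx₁ ⋯ dx_n, where ω_i(x) = 1/(1-x) if i ∈ {1, k₁+1, k₁+k₂+1, …, k₁+⋯+k_{d-1}+1} and ω_i(x) = 1/x otherwise. -/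
/-!
Expand `1/(1 - x) = ∑ₜ xᵗ` at every block start. In `ℝ≥0∞` monotone convergence lets the sum
over the exponents `m ∈ ℕ^{d}` leave the integral, which becomes a sum of integrals of monomials
`∏ xᵢ^(aᵢ - 1)` over the simplex. Integrating the variables in increasing order, such a
monomial contributes `∏ᵢ 1/(a₁ + ⋯ + aᵢ)`. For the monomial indexed by `m` these partial sums are
constant on the `j`-th block, equal to `nⱼ = (m₁ + 1) + ⋯ + (mⱼ + 1)`, and `m ↦ n` is a bijection
onto the strictly increasing sequences of positive integers.
-/

open MeasureTheory Finset
open scoped Classical ENNReal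

theorem strictMono_snoc_iff {α : Type*} [Preorder α] {n : ℕ} {y : Fin n → α} {t : α} :
    StrictMono (Fin.snoc y t : Fin (n + 1) → α) ↔ StrictMono y ∧ ∀ i, y i < t := by
  refine ⟨fun h => ⟨fun a b hab => ?_, fun i => ?_⟩, fun ⟨hy, hyt⟩ a b hab => ?_⟩
  · simpa using h (Fin.castSucc_lt_castSucc_iff.2 hab)
  · simpa using h (Fin.castSucc_lt_last i)
  · induction b using Fin.lastCases with
    | last =>
      obtain ⟨a, rfl⟩ := Fin.exists_castSucc_eq.2 hab.ne
      simpa using hyt a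
    | cast b =>
      obtain ⟨a, rfl⟩ := Fin.exists_castSucc_eq.2 (hab.trans (Fin.castSucc_lt_last b)).ne
      simpa using hy (Fin.castSucc_lt_castSucc_iff.1 hab)

def orderedSimplex (n : ℕ) (c : ℝ) : Set (Fin n → ℝ) :=
  {x | StrictMono x ∧ ∀ i, x i ∈ Set.Ioo 0 c}

theorem measurableSet_orderedSimplex (n : ℕ) (c : ℝ) : MeasurableSet (orderedSimplex n c) := by
  have : orderedSimplex n c =
      (⋂ (i) (j) (_ : i < j), {x : Fin n → ℝ | x i < x j}) ∩
        ⋂ i, (fun x => x i) ⁻¹' Set.Ioo 0 c := by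
    ext x; simp [orderedSimplex, StrictMono]
  rw [this]
  exact .inter (.iInter fun i => .iInter fun j => .iInter fun _ =>
      measurableSet_lt (measurable_pi_apply i) (measurable_pi_apply j))
    (.iInter fun i => measurable_pi_apply i measurableSet_Ioo)

theorem snoc_mem_orderedSimplex_iff {n : ℕ} {c t : ℝ} {y : Fin n → ℝ} :
    (Fin.snoc y t : Fin (n + 1) → ℝ) ∈ orderedSimplex (n + 1) c ↔
      t ∈ Set.Ioo 0 c ∧ y ∈ orderedSimplex n t := by
  simp only [orderedSimplex, Set.mem_ofPred_eq, strictMono_snoc_iff, Fin.forall_fin_succ',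
    Fin.snoc_castSucc, Fin.snoc_last, Set.mem_Ioo]
  constructor
  · rintro ⟨⟨hy, hyt⟩, hpos, ht⟩
    exact ⟨ht, hy, fun i => ⟨(hpos i).1, hyt i⟩⟩
  · rintro ⟨ht, hy, hyt⟩
    exact ⟨⟨hy, fun i => (hyt i).2⟩, fun i => ⟨(hyt i).1, (hyt i).2.trans ht.2⟩, ht⟩

theorem lintegral_eq_lintegral_lintegral_snoc {α : Type*} [MeasureSpace α]
    [SigmaFinite (volume : Measure α)] {n : ℕ} {f : (Fin (n + 1) → α) → ℝ≥0∞} (hf : Measurable f) :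
    ∫⁻ x, f x = ∫⁻ t, ∫⁻ y : Fin n → α, f (Fin.snoc y t) := by
  set e := MeasurableEquiv.piFinSuccAbove (fun _ : Fin (n + 1) => α) (Fin.last n)
  rw [← (volume_preserving_piFinSuccAbove _ (Fin.last n)).symm.lintegral_comp hf,
    Measure.volume_eq_prod,
    lintegral_prod (fun z => f (e.symm z)) (hf.comp e.symm.measurable).aemeasurable]
  simp [e, MeasurableEquiv.piFinSuccAbove_symm_apply, Fin.insertNthEquiv, Fin.insertNth_last']

theorem lintegral_Ioo_inv_eq_top {c : ℝ} (hc : 0 < c) :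
    ∫⁻ t in Set.Ioo 0 c, ENNReal.ofReal t⁻¹ = ∞ := by
  by_contra h
  have hint : IntegrableOn (fun t : ℝ => t⁻¹) (Set.Ioo 0 c) :=
    ⟨measurable_inv.aestronglyMeasurable, (hasFiniteIntegral_iff_ofReal
      ((ae_restrict_mem measurableSet_Ioo).mono fun t ht => inv_nonneg.2 ht.1.le)).2
        (lt_top_iff_ne_top.2 h)⟩
  rw [← intervalIntegrable_iff_integrableOn_Ioo_of_le hc.le, intervalIntegrable_inv_iff] at hint
  simp [hc.ne, Set.uIcc_of_le hc.le] at hint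
  linarith

-- For `s = 0` both sides are `∞`, the right one because `(0 : ℝ≥0∞)⁻¹ = ∞`.
theorem lintegral_Ioo_zpow_sub_one (s : ℕ) {c : ℝ} (hc : 0 < c) :
    ∫⁻ t in Set.Ioo 0 c, ENNReal.ofReal (t ^ ((s : ℤ) - 1)) =
      ENNReal.ofReal (c ^ s) * (s : ℝ≥0∞)⁻¹ := by
  rcases s with _ | s
  · simpa using lintegral_Ioo_inv_eq_top hc
  have hint : IntegrableOn (fun t : ℝ => t ^ s) (Set.Ioo 0 c) :=
    (continuous_pow s).integrableOn_Icc.mono_set Set.Ioo_subset_Icc_self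
  have hpos : 0 ≤ᵐ[volume.restrict (Set.Ioo 0 c)] fun t : ℝ => t ^ s :=
    (ae_restrict_mem measurableSet_Ioo).mono fun t ht => pow_nonneg ht.1.le s
  simp only [Nat.cast_add, Nat.cast_one, add_sub_cancel_right, zpow_natCast]
  rw [← ofReal_integral_eq_lintegral_ofReal hint hpos, integral_Ioc_eq_integral_Ioo.symm,
    ← intervalIntegral.integral_of_le hc.le, integral_pow, zero_pow s.succ_ne_zero, sub_zero,
    ENNReal.ofReal_div_of_pos (by positivity), div_eq_mul_inv, ← Nat.cast_add_one,
    ENNReal.ofReal_natCast, Nat.cast_add_one]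

theorem measurable_prod_ofReal_zpow (n : ℕ) (e : Fin n → ℤ) :
    Measurable fun x : Fin n → ℝ => ∏ i, ENNReal.ofReal (x i ^ e i) := by
  fun_prop

theorem lintegral_orderedSimplex_prod_zpow (a : ℕ → ℕ) (n : ℕ) {c : ℝ} (hc : 0 < c) :
    ∫⁻ x in orderedSimplex n c, ∏ i : Fin n, ENNReal.ofReal (x i ^ ((a i : ℤ) - 1)) =
      ENNReal.ofReal (c ^ ∑ l ∈ range n, a l) *
        ∏ i : Fin n, ((∑ l ∈ range (i + 1), a l : ℕ) : ℝ≥0∞)⁻¹ := by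
  induction n generalizing c with
  | zero => simp [orderedSimplex, Subsingleton.strictMono, volume_pi]
  | succ n ih =>
    set F : (Fin n → ℝ) → ℝ≥0∞ := fun y => ∏ i : Fin n, ENNReal.ofReal (y i ^ ((a i : ℤ) - 1))
    have hsnoc : ∀ t y, (orderedSimplex (n + 1) c).indicator
        (fun x => ∏ i : Fin (n + 1), ENNReal.ofReal (x i ^ ((a i : ℤ) - 1))) (Fin.snoc y t) =
        (Set.Ioo 0 c).indicator
          (fun t => (orderedSimplex n t).indicator F y * ENNReal.ofReal (t ^ ((a n : ℤ) - 1)))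
          t := by
      intro t y
      by_cases ht : t ∈ Set.Ioo 0 c <;> by_cases hy : y ∈ orderedSimplex n t <;>
        simp [Set.indicator, snoc_mem_orderedSimplex_iff, ht, hy, F, Fin.prod_univ_castSucc]
    have hinner : ∀ t, ∫⁻ y, (Set.Ioo 0 c).indicator
        (fun t => (orderedSimplex n t).indicator F y * ENNReal.ofReal (t ^ ((a n : ℤ) - 1))) t =
        (Set.Ioo 0 c).indicator (fun t => ENNReal.ofReal
          (t ^ (((∑ l ∈ range (n + 1), a l : ℕ) : ℤ) - 1)) *
            ∏ i : Fin n, ((∑ l ∈ range (i + 1), a l : ℕ) : ℝ≥0∞)⁻¹) t := by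
      intro t
      by_cases ht : t ∈ Set.Ioo 0 c
      · simp only [Set.indicator_of_mem ht]
        rw [lintegral_mul_const _ ((measurable_prod_ofReal_zpow n _).indicator
            (measurableSet_orderedSimplex n t)),
          lintegral_indicator (measurableSet_orderedSimplex n t),
          ih ht.1, mul_right_comm, ← ENNReal.ofReal_mul (pow_nonneg ht.1.le _), ← zpow_natCast,
          ← zpow_add₀ ht.1.ne', sum_range_succ]
        push_cast
        ring_nf
      · simp [ht]
    rw [← lintegral_indicator (measurableSet_orderedSimplex _ _),
      lintegral_eq_lintegral_lintegral_snoc ((measurable_prod_ofReal_zpow _ _).indicator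
        (measurableSet_orderedSimplex _ _))]
    simp_rw [hsnoc, hinner]
    rw [lintegral_indicator measurableSet_Ioo, lintegral_mul_const _ (by fun_prop),
      lintegral_Ioo_zpow_sub_one _ hc, Fin.prod_univ_castSucc]
    simp only [Fin.val_castSucc, Fin.val_last]
    ring

section PartialSums

variable {ι : Type*} [LinearOrder ι] [LocallyFiniteOrderBot ι]

theorem sum_Iic_eq_sum_Iio_add {M : Type*} [AddCommMonoid M] (f : ι → M) (j : ι) :
    ∑ i ∈ Iic j, f i = ∑ i ∈ Iio j, f i + f j := by
  rw [← Iio_insert, sum_insert notMem_Iio_self, add_comm]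

theorem Iic_subset_Iio_of_lt {a b : ι} (h : a < b) : Iic a ⊆ Iio b :=
  fun _ hi => mem_Iio.2 ((mem_Iic.1 hi).trans_lt h)

theorem sup_Iio_sum_Iic_eq_sum_Iio (f : ι → ℕ) (j : ι) :
    (Iio j).sup (fun j' => ∑ i ∈ Iic j', f i) = ∑ i ∈ Iio j, f i := by
  refine le_antisymm (Finset.sup_le fun j' hj' =>
    sum_le_sum_of_subset (Iic_subset_Iio_of_lt (mem_Iio.1 hj'))) ?_
  rcases (Iio j).eq_empty_or_nonempty with h | h
  · simp [h]
  · exact (sum_le_sum_of_subset fun i hi => mem_Iic.2 (le_max' _ i hi)).trans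
      (le_sup (f := fun j' => ∑ i ∈ Iic j', f i) (max'_mem _ h))

def equivStrictMonoPos (q : ℕ) : (Fin q → ℕ) ≃ {g : Fin q → ℕ // StrictMono g ∧ ∀ i, 0 < g i} where
  toFun m := ⟨fun j => ∑ i ∈ Iic j, (m i + 1),
    fun a b hab => calc
      ∑ i ∈ Iic a, (m i + 1) ≤ ∑ i ∈ Iio b, (m i + 1) :=
        sum_le_sum_of_subset (Iic_subset_Iio_of_lt hab)
      _ < ∑ i ∈ Iic b, (m i + 1) := by rw [sum_Iic_eq_sum_Iio_add]; omega,
    fun j => sum_pos (fun i _ => Nat.succ_pos _) ⟨j, mem_Iic.2 le_rfl⟩⟩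
  invFun g j := g.1 j - (Iio j).sup g.1 - 1
  left_inv m := by
    funext j
    dsimp only
    rw [sup_Iio_sum_Iic_eq_sum_Iio (fun i => m i + 1), sum_Iic_eq_sum_Iio_add]
    omega
  right_inv g := by
    ext1; funext j
    induction j using WellFoundedLT.induction with
    | _ j ih =>
      have hsup : (Iio j).sup g.1 < g.1 j :=
        (Finset.sup_lt_iff (g.2.2 j)).2 fun i hi => g.2.1 (mem_Iio.1 hi)
      have hIio : ∑ i ∈ Iio j, (g.1 i - (Iio i).sup g.1 - 1 + 1) = (Iio j).sup g.1 := by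
        rw [← sup_Iio_sum_Iic_eq_sum_Iio]
        exact sup_congr rfl fun i hi => ih i (mem_Iio.1 hi)
      simp only [sum_Iic_eq_sum_Iio_add, hIio]
      omega

end PartialSums

section Blocks

variable {q : ℕ} {k : Fin q → ℕ}

theorem val_finSigmaFinEquiv (j : Fin q) (r : Fin (k j)) :
    (finSigmaFinEquiv ⟨j, r⟩ : ℕ) = ∑ i ∈ Iio j, k i + r := by
  rw [finSigmaFinEquiv_apply]
  congr 1
  refine sum_nbij (Fin.castLE j.2.le) (fun i _ => by simp [Fin.lt_def])
    (fun _ _ _ _ h => Fin.castLE_injective _ h) (fun i hi => ?_) (fun _ _ => rfl)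
  exact ⟨⟨i, by simpa using hi⟩, mem_coe.2 (mem_univ _), rfl⟩

theorem sum_Iio_add_le_sum_Iio {j j' : Fin q} (h : j < j') :
    ∑ i ∈ Iio j, k i + k j ≤ ∑ i ∈ Iio j', k i := by
  rw [← sum_Iic_eq_sum_Iio_add]
  exact sum_le_sum_of_subset (Iic_subset_Iio_of_lt h)

theorem sum_Iio_strictMono (hk : ∀ j, 0 < k j) : StrictMono fun j => ∑ i ∈ Iio j, k i :=
  fun j _ h => (Nat.lt_add_of_pos_right (hk j)).trans_le (sum_Iio_add_le_sum_Iio h)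

theorem sum_Iio_le_finSigmaFinEquiv_iff {j j' : Fin q} (r : Fin (k j)) :
    ∑ i ∈ Iio j', k i ≤ finSigmaFinEquiv ⟨j, r⟩ ↔ j' ≤ j := by
  rw [val_finSigmaFinEquiv]
  refine ⟨fun h => not_lt.1 fun hlt => ?_, fun h => ?_⟩
  · have := sum_Iio_add_le_sum_Iio (k := k) hlt
    omega
  · exact (sum_le_sum_of_subset (Iio_subset_Iio h)).trans (Nat.le_add_right _ _)

theorem exists_finSigmaFinEquiv_eq_sum_Iio_iff (j : Fin q) (r : Fin (k j)) :
    (∃ j', (finSigmaFinEquiv ⟨j, r⟩ : ℕ) = ∑ i ∈ Iio j', k i) ↔ (r : ℕ) = 0 := by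
  refine ⟨fun ⟨_, h⟩ => ?_, fun hr => ⟨j, by rw [val_finSigmaFinEquiv, hr, add_zero]⟩⟩
  have := sum_le_sum_of_subset (f := k)
    (Iio_subset_Iio ((sum_Iio_le_finSigmaFinEquiv_iff r).1 h.ge))
  rw [val_finSigmaFinEquiv] at h
  omega

-- The exponent plus one of `x_l` in the monomial indexed by `m`: `m j + 1` at the start of
-- block `j`, and `0` inside a block.
def blockExponent (k m : Fin q → ℕ) (l : ℕ) : ℕ :=
  ∑ j, if ∑ i ∈ Iio j, k i = l then m j + 1 else 0

theorem blockExponent_finSigmaFinEquiv (hk : ∀ j, 0 < k j) (m : Fin q → ℕ) (j : Fin q)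
    (r : Fin (k j)) :
    blockExponent k m (finSigmaFinEquiv ⟨j, r⟩) = if (r : ℕ) = 0 then m j + 1 else 0 := by
  split_ifs with hr
  · rw [blockExponent, val_finSigmaFinEquiv, hr, add_zero]
    simp [(sum_Iio_strictMono hk).injective.eq_iff]
  · refine sum_eq_zero fun j' _ => if_neg fun h => hr ?_
    exact (exists_finSigmaFinEquiv_eq_sum_Iio_iff j r).1 ⟨j', h.symm⟩

theorem sum_range_blockExponent (m : Fin q → ℕ) (j : Fin q) (r : Fin (k j)) :
    ∑ l ∈ range (finSigmaFinEquiv ⟨j, r⟩ + 1), blockExponent k m l = ∑ i ∈ Iic j, (m i + 1) := by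
  simp only [blockExponent]
  rw [sum_comm]
  simp only [sum_ite_eq, mem_range, Nat.lt_succ_iff, sum_Iio_le_finSigmaFinEquiv_iff]
  rw [← sum_filter]
  congr 1
  ext
  simp

end Blocks

theorem ENNReal.prod_tsum {β : Type*} (q : ℕ) (f : Fin q → β → ℝ≥0∞) :
    ∏ j, ∑' b, f j b = ∑' g : Fin q → β, ∏ j, f j (g j) := by
  induction q with
  | zero => simp
  | succ q ih =>
    rw [Fin.prod_univ_succ, ih, ← (Fin.consEquiv fun _ => β).tsum_eq, ENNReal.tsum_prod',
      ← ENNReal.tsum_mul_right]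
    simp [Fin.consEquiv, Fin.prod_univ_succ, ENNReal.tsum_mul_left]

theorem ENNReal.ofReal_inv_one_sub_eq_tsum_pow {x : ℝ} (hx₀ : 0 ≤ x) (hx₁ : x < 1) :
    ENNReal.ofReal (1 - x)⁻¹ = ∑' t : ℕ, ENNReal.ofReal (x ^ t) := by
  rw [← tsum_geometric_of_lt_one hx₀ hx₁,
    ENNReal.ofReal_tsum_of_nonneg (pow_nonneg hx₀) (summable_geometric_of_lt_one hx₀ hx₁)]

theorem prod_ofReal_inv_eq_tsum_prod_ofReal_zpow {K : ℕ} (hK : 0 < K) {y : Fin K → ℝ}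
    (hy : ∀ r, y r ∈ Set.Ioo 0 1) :
    ∏ r : Fin K, ENNReal.ofReal (if (r : ℕ) = 0 then (1 - y r)⁻¹ else (y r)⁻¹) =
      ∑' t : ℕ, ∏ r : Fin K,
        ENNReal.ofReal (y r ^ (((if (r : ℕ) = 0 then t + 1 else 0 : ℕ) : ℤ) - 1)) := by
  obtain ⟨K, rfl⟩ := Nat.exists_eq_succ_of_ne_zero hK.ne'
  simp only [Fin.prod_univ_succ, Fin.val_zero, Fin.val_succ, if_true, Nat.succ_ne_zero, if_false,
    ENNReal.ofReal_inv_one_sub_eq_tsum_pow (hy 0).1.le (hy 0).2, ← ENNReal.tsum_mul_right]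
  simp

section Integrand

variable {q : ℕ} {k : Fin q → ℕ}

noncomputable def mzvIntegrand (k : Fin q → ℕ) (x : Fin (∑ j, k j) → ℝ) : ℝ :=
  ∏ i : Fin (∑ j, k j), if ∃ j, (i : ℕ) = ∑ j' ∈ Iio j, k j' then (1 - x i)⁻¹ else (x i)⁻¹

theorem measurable_mzvIntegrand (k : Fin q → ℕ) : Measurable (mzvIntegrand k) :=
  Finset.measurable_prod _ fun _ _ => by split_ifs <;> fun_prop

theorem ite_inv_one_sub_inv_nonneg (P : Prop) [Decidable P] {y : ℝ} (hy : y ∈ Set.Ioo 0 1) :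
    0 ≤ if P then (1 - y)⁻¹ else y⁻¹ := by
  split_ifs <;> exact inv_nonneg.2 (by linarith [hy.1, hy.2])

theorem mzvIntegrand_nonneg {x : Fin (∑ j, k j) → ℝ} (hx : ∀ i, x i ∈ Set.Ioo 0 1) :
    0 ≤ mzvIntegrand k x :=
  prod_nonneg fun i _ => ite_inv_one_sub_inv_nonneg _ (hx i)

theorem ofReal_mzvIntegrand_eq_tsum (hk : ∀ j, 0 < k j) {x : Fin (∑ j, k j) → ℝ}
    (hx : ∀ i, x i ∈ Set.Ioo 0 1) :
    ENNReal.ofReal (mzvIntegrand k x) =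
      ∑' m : Fin q → ℕ, ∏ i, ENNReal.ofReal (x i ^ ((blockExponent k m i : ℤ) - 1)) := by
  rw [mzvIntegrand, ENNReal.ofReal_prod_of_nonneg fun i _ => ite_inv_one_sub_inv_nonneg _ (hx i),
    ← finSigmaFinEquiv.prod_comp, Fintype.prod_sigma]
  simp_rw [exists_finSigmaFinEquiv_eq_sum_Iio_iff]
  rw [prod_congr rfl fun j _ => prod_ofReal_inv_eq_tsum_prod_ofReal_zpow (hk j) fun r => hx _,
    ENNReal.prod_tsum]
  refine tsum_congr fun m => ?_
  rw [← finSigmaFinEquiv.prod_comp, Fintype.prod_sigma]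
  simp_rw [blockExponent_finSigmaFinEquiv hk]

theorem lintegral_ofReal_mzvIntegrand (hk : ∀ j, 0 < k j) :
    ∫⁻ x in orderedSimplex (∑ j, k j) 1, ENNReal.ofReal (mzvIntegrand k x) =
      ∑' m : Fin q → ℕ, ∏ j, ((∑ i ∈ Iic j, (m i + 1) : ℕ) ^ k j : ℝ≥0∞)⁻¹ := by
  rw [setLIntegral_congr_fun (measurableSet_orderedSimplex _ _)
      fun x hx => ofReal_mzvIntegrand_eq_tsum hk hx.2,
    lintegral_tsum fun m => (measurable_prod_ofReal_zpow _ _).aemeasurable]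
  refine tsum_congr fun m => ?_
  rw [lintegral_orderedSimplex_prod_zpow _ _ one_pos, one_pow, ENNReal.ofReal_one, one_mul,
    ← finSigmaFinEquiv.prod_comp, Fintype.prod_sigma]
  simp_rw [sum_range_blockExponent]
  simp [ENNReal.inv_pow]

end Integrand

theorem multiple_zeta_value_eq_iterated_integral_general (d : ℕ) (k : Fin (d + 1) → ℕ)
    (hk : ∀ i, 0 < k i) :
    (∑' n : {g : Fin (d + 1) → ℕ // StrictMono g ∧ ∀ i, 0 < g i},
        ∏ i, (((n : Fin (d + 1) → ℕ) i : ℝ) ^ (k i))⁻¹)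
      = ∫ x in {x : Fin (∑ j, k j) → ℝ | StrictMono x ∧ ∀ i, x i ∈ Set.Ioo (0 : ℝ) 1},
          ∏ i : Fin (∑ j, k j), (if ∃ m : Fin (d + 1), (i : ℕ) = ∑ j ∈ Finset.Iio m, k j
                then (1 - x i)⁻¹ else (x i)⁻¹) := by
  change _ = ∫ x in orderedSimplex (∑ j, k j) 1, mzvIntegrand k x
  have hnonneg : 0 ≤ᵐ[volume.restrict (orderedSimplex (∑ j, k j) 1)] mzvIntegrand k := by
    filter_upwards [ae_restrict_mem (measurableSet_orderedSimplex _ _)] with x hx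
    exact mzvIntegrand_nonneg hx.2
  have hfin : ∀ m : Fin (d + 1) → ℕ, ∏ j, (((∑ i ∈ Iic j, (m i + 1) : ℕ) : ℝ≥0∞) ^ k j)⁻¹ ≠ ∞ :=
    fun m => ENNReal.prod_ne_top fun j _ => ENNReal.inv_ne_top.2
      (pow_ne_zero _ (Nat.cast_ne_zero.2 ((equivStrictMonoPos _ m).2.2 j).ne'))
  rw [← (equivStrictMonoPos (d + 1)).tsum_eq,
    integral_eq_lintegral_of_nonneg_ae hnonneg (measurable_mzvIntegrand k).aestronglyMeasurable,
    lintegral_ofReal_mzvIntegrand hk, ENNReal.tsum_toReal_eq hfin]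
  refine tsum_congr fun m => ?_
  simp only [ENNReal.toReal_prod, ENNReal.toReal_inv, ENNReal.toReal_pow, ENNReal.toReal_natCast]
  rfl

/-- **Kontsevich.** Let `k₁, …, k_d` (here `k : Fin (d+1) → ℕ`, so
the depth is `d+1 ≥ 1`) be positive integers with the last one `> 1`, and set
`n = k₁ + ⋯ + k_d`.  The multiple zeta value
`ζ(k₁,…,k_d) = ∑_{0<n₁<⋯<n_d} n₁^{-k₁}⋯n_d^{-k_d}` equals the iterated integral
over the simplex `0 < x₁ < ⋯ < x_n < 1` of `∏ ω_i(x_i)`, where `ω_i(x) = 1/(1-x)`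
if `i` is of the form `k₁ + ⋯ + k_j + 1` for some `0 ≤ j ≤ d-1` (i.e. `i-1` is a
partial sum of the weights) and `ω_i(x) = 1/x` otherwise. -/
theorem multiple_zeta_value_eq_iterated_integral (d : ℕ) (k : Fin (d + 1) → ℕ)
    (hk : ∀ i, 0 < k i) (hlast : 1 < k (Fin.last d)) :
    (∑' n : {g : Fin (d + 1) → ℕ // StrictMono g ∧ ∀ i, 0 < g i},
        ∏ i, (((n : Fin (d + 1) → ℕ) i : ℝ) ^ (k i))⁻¹)
      = ∫ x in {x : Fin (∑ j, k j) → ℝ | StrictMono x ∧ ∀ i, x i ∈ Set.Ioo (0 : ℝ) 1},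
          ∏ i : Fin (∑ j, k j), (if ∃ m : Fin (d + 1), (i : ℕ) = ∑ j ∈ Finset.Iio m, k j
                then (1 - x i)⁻¹ else (x i)⁻¹) :=
  multiple_zeta_value_eq_iterated_integral_general d k hk
end
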